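/- (Exact DMD theorem.) With the snapshot SVD setup below, suppose w ∈ ℂ^r is a nonzero vector and μ ∈ ℂ a nonzero scalar with Ã·w = μ·w, where Ã := U* Y V Σ⁻¹. Define the DMD mode φ := (Y V Σ⁻¹)·w ∈ ℂ^m. Then φ ≠ 0 and A·φ = μ·φ, where A := Y V Σ⁻¹ U*; that is, every nonzero DMD eigenvalue of the projected matrix Ã is an eigenvalue of the full DMD operator A, with eigenvector given by the exact DMD mode φ. -/
import Mathlib


open Matrix

/-- Exact DMD theorem: a nonzero eigenpair `(μ, w)` of the projected matrix
`Ã = U* Y V Σ⁻¹` yields the eigenpair `(μ, φ)` of the DMD operator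
`A = Y V Σ⁻¹ U*`, where `φ = (Y V Σ⁻¹) w` is the exact DMD mode. -/
theorem exact_dmd {m n r : ℕ}
    (X Y : Matrix (Fin m) (Fin n) ℂ)
    (U : Matrix (Fin m) (Fin r) ℂ) (S : Matrix (Fin r) (Fin r) ℂ)
    (V : Matrix (Fin n) (Fin r) ℂ)
    (hX : X = U * S * Vᴴ)
    (hU : Uᴴ * U = 1) (hV : Vᴴ * V = 1) (hS : IsUnit S.det)
    (w : Fin r → ℂ) (μ : ℂ) (hw : w ≠ 0) (hμ : μ ≠ 0)
    (heig : (Uᴴ * Y * V * S⁻¹).mulVec w = μ • w) :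
    (Y * V * S⁻¹).mulVec w ≠ 0 ∧
      (Y * V * S⁻¹ * Uᴴ).mulVec ((Y * V * S⁻¹).mulVec w) =
        μ • (Y * V * S⁻¹).mulVec w := by
  have key : Uᴴ.mulVec ((Y * V * S⁻¹).mulVec w) = μ • w := by
    rw [mulVec_mulVec, show Uᴴ * (Y * V * S⁻¹) = Uᴴ * Y * V * S⁻¹ by rw [← Matrix.mul_assoc, ← Matrix.mul_assoc], heig]
  constructor
  · intro h
    rw [h, mulVec_zero] at key
    exact smul_ne_zero hμ hw key.symm
  · calc (Y * V * S⁻¹ * Uᴴ).mulVec ((Y * V * S⁻¹).mulVec w)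
        = (Y * V * S⁻¹).mulVec (Uᴴ.mulVec ((Y * V * S⁻¹).mulVec w)) := by
          simp [mulVec_mulVec, Matrix.mul_assoc]
      _ = (Y * V * S⁻¹).mulVec (μ • w) := by rw [key]
      _ = μ • (Y * V * S⁻¹).mulVec w := by rw [mulVec_smul]
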